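/- arXiv:2203.15747 — 2 statements merged into one kernel-verified Lean document; each statement's English description precedes it below -/
import Mathlib

section
/- Let $L, F_0, F \geq 0$, $N \geq 1$, and let $(X_k)_{1 \leq k \leq N}$ be nonnegative continuous functions on $[0,1]$ with $X_k(t) \leq F_0^k + kL\int_0^t X_{k+1}(s)\,ds$ for $k < N$, and $\sup_{t \leq 1} X_N(t) \leq F^N$. Then for all $t$ with $4Lt\max(F_0,F) < 1$ and $t \leq 1$, and all $1 \leq k \leq N$, one has $X_k(t) \leq 2^k F_0^k + 2^{2k-N-1} F^k$. -/
open MeasureTheory intervalIntegral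

lemma choose_le_two_pow' (n j : ℕ) : ((n.choose j : ℕ) : ℝ) ≤ 2 ^ n := by
  have h : n.choose j ≤ 2 ^ n := by
    rcases le_or_gt j n with h | h
    · calc n.choose j ≤ ∑ i ∈ Finset.range (n+1), n.choose i :=
        Finset.single_le_sum (fun i _ => Nat.zero_le _) (Finset.mem_range.2 (Nat.lt_succ_of_le h))
      _ = 2 ^ n := Nat.sum_range_choose n
    · simp [Nat.choose_eq_zero_of_lt h]
  exact_mod_cast h

lemma geom_half_le_two (m : ℕ) : ∑ j ∈ Finset.range m, ((1:ℝ)/2)^j ≤ 2 := by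
  rw [geom_sum_eq (by norm_num : (1/2:ℝ) ≠ 1)]
  have h := pow_nonneg (by norm_num : (0:ℝ) ≤ 1/2) m
  have he : ((1/2:ℝ)^m - 1)/(1/2 - 1) = 2 - 2*(1/2)^m := by ring
  rw [he]; linarith

lemma hierarchy_key (L F0 F : ℝ) (hL : 0 ≤ L)
    (N : ℕ) (X : ℕ → ℝ → ℝ)
    (hcont : ∀ k, 1 ≤ k → k ≤ N → ContinuousOn (X k) (Set.Icc 0 1))
    (hrec : ∀ k, 1 ≤ k → k < N → ∀ t ∈ Set.Icc (0:ℝ) 1,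
      X k t ≤ F0 ^ k + k * L * ∫ s in (0:ℝ)..t, X (k + 1) s)
    (htop : ∀ t ∈ Set.Icc (0:ℝ) 1, X N t ≤ F ^ N) :
    ∀ d k, 1 ≤ k → k + d = N → ∀ t ∈ Set.Icc (0:ℝ) 1,
      X k t ≤ (∑ j ∈ Finset.range d, (((k - 1 + j).choose j : ℕ) : ℝ) * (L*t)^j * F0^(k+j))
        + (((N - 1).choose d : ℕ) : ℝ) * (L*t)^d * F^N := by
  intro d
  induction d with
  | zero =>
    intro k hk hkd t ht
    have hkN : k = N := by omega
    subst hkN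
    simpa using htop t ht
  | succ d ih =>
    intro k hk hkd t ht
    obtain ⟨ht0, ht1⟩ := ht
    have hkN : k < N := by omega
    have hkd' : (k + 1) + d = N := by omega
    set G : ℝ → ℝ := fun s =>
      (∑ j ∈ Finset.range d, (((k + j).choose j : ℕ) : ℝ) * (L*s)^j * F0^(k+1+j))
        + (((N - 1).choose d : ℕ) : ℝ) * (L*s)^d * F^N with hGdef
    have hIH : ∀ s ∈ Set.Icc (0:ℝ) 1, X (k+1) s ≤ G s := by
      intro s hs
      have h := ih (k+1) (by omega) hkd' s hs
      simpa [hGdef, Nat.add_sub_cancel] using h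
    have hc1 : ∀ (c e : ℝ) (j : ℕ), Continuous (fun s : ℝ => c * (L*s)^j * e) :=
      fun c e j => (continuous_const.mul ((continuous_const.mul continuous_id).pow j)).mul
        continuous_const
    have hGcont : Continuous G :=
      (continuous_finset_sum _ fun j _ => hc1 _ _ j).add (hc1 _ _ d)
    have hXint : IntervalIntegrable (X (k+1)) volume 0 t := by
      refine ContinuousOn.intervalIntegrable ?_
      refine (hcont (k+1) (by omega) (by omega)).mono ?_
      rw [Set.uIcc_of_le ht0]
      exact Set.Icc_subset_Icc le_rfl ht1
    have hmono : (∫ s in (0:ℝ)..t, X (k+1) s) ≤ ∫ s in (0:ℝ)..t, G s := by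
      refine intervalIntegral.integral_mono_on ht0 hXint (hGcont.intervalIntegrable _ _) ?_
      intro s hs
      exact hIH s ⟨hs.1, hs.2.trans ht1⟩
    have hbase : ∀ (c e : ℝ) (j : ℕ),
        (∫ s in (0:ℝ)..t, c * (L*s)^j * e) = c * L^j * e * (t^(j+1) / ((j:ℝ)+1)) := by
      intro c e j
      have h1 : (fun s : ℝ => c * (L*s)^j * e) = fun s => (c * L^j * e) * s^j :=
        funext fun s => by ring
      rw [h1, intervalIntegral.integral_const_mul, integral_pow]
      norm_num
    have hGint : (∫ s in (0:ℝ)..t, G s)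
        = (∑ j ∈ Finset.range d,
            (((k + j).choose j : ℕ) : ℝ) * L^j * F0^(k+1+j) * (t^(j+1) / ((j:ℝ)+1)))
          + (((N - 1).choose d : ℕ) : ℝ) * L^d * F^N * (t^(d+1) / ((d:ℝ)+1)) := by
      have h1 : IntervalIntegrable
          (fun s : ℝ => ∑ j ∈ Finset.range d,
            (((k + j).choose j : ℕ) : ℝ) * (L*s)^j * F0^(k+1+j)) volume 0 t :=
        (continuous_finset_sum _ fun j _ => hc1 _ _ j).intervalIntegrable _ _
      have h2 : IntervalIntegrable
          (fun s : ℝ => (((N - 1).choose d : ℕ) : ℝ) * (L*s)^d * F^N) volume 0 t :=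
        (hc1 _ _ d).intervalIntegrable _ _
      simp only [hGdef]
      rw [intervalIntegral.integral_add h1 h2,
        intervalIntegral.integral_finset_sum (fun j _ =>
            (hc1 _ _ j).intervalIntegrable _ _)]
      congr 1
      · exact Finset.sum_congr rfl fun j _ => hbase _ _ _
      · exact hbase _ _ _
    have hfin : F0^k + (k:ℝ) * L * (∫ s in (0:ℝ)..t, G s)
        = (∑ j ∈ Finset.range (d+1), (((k - 1 + j).choose j : ℕ) : ℝ) * (L*t)^j * F0^(k+j))
          + (((N - 1).choose (d+1) : ℕ) : ℝ) * (L*t)^(d+1) * F^N := by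
      rw [hGint, Finset.sum_range_succ', mul_add, Finset.mul_sum]
      have hterm : ∀ i ∈ Finset.range d,
          (k:ℝ) * L * ((((k + i).choose i : ℕ) : ℝ) * L^i * F0^(k+1+i) * (t^(i+1) / ((i:ℝ)+1)))
          = (((k - 1 + (i+1)).choose (i+1) : ℕ) : ℝ) * (L*t)^(i+1) * F0^(k+(i+1)) := by
        intro i _
        have he : k - 1 + (i+1) = k + i := by omega
        rw [he]
        have h1 : (k+i).choose (i+1) * (i+1) = (k+i).choose i * k := by
          rw [Nat.choose_succ_right_eq, Nat.add_sub_cancel]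
        have hi : ((i:ℝ)+1) ≠ 0 := by positivity
        have hcc : (((k+i).choose (i+1) : ℕ) : ℝ)
            = (((k+i).choose i : ℕ) : ℝ) * (k:ℝ) / ((i:ℝ)+1) := by
          rw [eq_div_iff hi]
          exact_mod_cast h1
        rw [hcc]
        field_simp
        ring
      rw [Finset.sum_congr rfl hterm]
      have htp : (k:ℝ) * L * ((((N - 1).choose d : ℕ) : ℝ) * L^d * F^N * (t^(d+1) / ((d:ℝ)+1)))
          = (((N - 1).choose (d+1) : ℕ) : ℝ) * (L*t)^(d+1) * F^N := by
        have h2 : (N-1).choose (d+1) * (d+1) = (N-1).choose d * k := by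
          rw [Nat.choose_succ_right_eq]
          congr 1
          omega
        have hd : ((d:ℝ)+1) ≠ 0 := by positivity
        have hcc : (((N-1).choose (d+1) : ℕ) : ℝ)
            = (((N-1).choose d : ℕ) : ℝ) * (k:ℝ) / ((d:ℝ)+1) := by
          rw [eq_div_iff hd]
          exact_mod_cast h2
        rw [hcc]
        field_simp
        ring
      rw [htp]
      simp
      ring
    calc X k t ≤ F0^k + (k:ℝ) * L * ∫ s in (0:ℝ)..t, X (k+1) s :=
          hrec k hk hkN t ⟨ht0, ht1⟩
      _ ≤ F0^k + (k:ℝ) * L * ∫ s in (0:ℝ)..t, G s := by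
          have hkL : (0:ℝ) ≤ (k:ℝ) * L := mul_nonneg (by positivity) hL
          nlinarith [mul_le_mul_of_nonneg_left hmono hkL]
      _ = _ := hfin

theorem finite_hierarchy_bound (L F0 F : ℝ) (hL : 0 ≤ L) (hF0 : 0 ≤ F0) (hF : 0 ≤ F)
    (N : ℕ) (hN : 1 ≤ N) (X : ℕ → ℝ → ℝ)
    (hcont : ∀ k, 1 ≤ k → k ≤ N → ContinuousOn (X k) (Set.Icc 0 1))
    (hnonneg : ∀ k, 1 ≤ k → k ≤ N → ∀ t ∈ Set.Icc (0:ℝ) 1, 0 ≤ X k t)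
    (hrec : ∀ k, 1 ≤ k → k < N → ∀ t ∈ Set.Icc (0:ℝ) 1,
      X k t ≤ F0 ^ k + k * L * ∫ s in (0:ℝ)..t, X (k + 1) s)
    (htop : ∀ t ∈ Set.Icc (0:ℝ) 1, X N t ≤ F ^ N)
    (k : ℕ) (hk1 : 1 ≤ k) (hkN : k ≤ N)
    (t : ℝ) (ht : t ∈ Set.Icc (0:ℝ) 1) (hsmall : 4 * L * t * max F0 F < 1) :
    X k t ≤ 2 ^ k * F0 ^ k + (2:ℝ) ^ (2 * (k:ℤ) - (N:ℤ) - 1) * F ^ k := by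
  have hkey := hierarchy_key L F0 F hL N X hcont hrec htop (N - k) k hk1 (by omega) t ht
  have ht0 : (0:ℝ) ≤ t := ht.1
  have hLt : (0:ℝ) ≤ L * t := mul_nonneg hL ht0
  have hLF0 : L * t * F0 ≤ 1/4 := by
    nlinarith [mul_le_mul_of_nonneg_left (le_max_left F0 F) hLt]
  have hLF : L * t * F ≤ 1/4 := by
    nlinarith [mul_le_mul_of_nonneg_left (le_max_right F0 F) hLt]
  have hLF0n : (0:ℝ) ≤ L * t * F0 := mul_nonneg hLt hF0
  have hLFn : (0:ℝ) ≤ L * t * F := mul_nonneg hLt hF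
  have hsum : (∑ j ∈ Finset.range (N - k),
      (((k - 1 + j).choose j : ℕ) : ℝ) * (L*t)^j * F0^(k+j)) ≤ 2^k * F0^k := by
    calc (∑ j ∈ Finset.range (N - k),
        (((k - 1 + j).choose j : ℕ) : ℝ) * (L*t)^j * F0^(k+j))
        ≤ ∑ j ∈ Finset.range (N - k), (2:ℝ)^(k-1) * (1/2)^j * F0^k := by
          refine Finset.sum_le_sum fun j _ => ?_
          have h1 : (((k - 1 + j).choose j : ℕ) : ℝ) * (L*t)^j * F0^(k+j)
              = (((k - 1 + j).choose j : ℕ) : ℝ) * (L*t*F0)^j * F0^k := by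
            rw [pow_add, mul_pow]; ring
          rw [h1]
          have h2 : (((k - 1 + j).choose j : ℕ) : ℝ) * (L*t*F0)^j * F0^k
              ≤ (2:ℝ)^(k-1+j) * (1/4)^j * F0^k := by
            gcongr <;> first
              | exact choose_le_two_pow' _ _
              | exact pow_le_pow_left₀ hLF0n hLF0 j
              | positivity
          refine h2.trans (le_of_eq ?_)
          rw [pow_add, show ((1:ℝ)/2)^j = 2^j * (1/4)^j by rw [← mul_pow]; norm_num]
          ring
      _ = (2:ℝ)^(k-1) * F0^k * ∑ j ∈ Finset.range (N - k), ((1:ℝ)/2)^j := by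
          rw [Finset.mul_sum]
          exact Finset.sum_congr rfl fun j _ => by ring
      _ ≤ (2:ℝ)^(k-1) * F0^k * 2 := by
          refine mul_le_mul_of_nonneg_left (geom_half_le_two _) (by positivity)
      _ = 2^k * F0^k := by
          have h2k : (2:ℝ)^k = 2^(k-1) * 2 := by
            rw [← pow_succ]
            congr 1
            omega
          rw [h2k]; ring
  have htopb : (((N - 1).choose (N - k) : ℕ) : ℝ) * (L*t)^(N-k) * F^N
      ≤ (2:ℝ) ^ (2 * (k:ℤ) - (N:ℤ) - 1) * F ^ k := by
    have h1 : (((N - 1).choose (N - k) : ℕ) : ℝ) * (L*t)^(N-k) * F^N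
        = (((N - 1).choose (N - k) : ℕ) : ℝ) * (L*t*F)^(N-k) * F^k := by
      have hFN : F^N = F^(N-k) * F^k := by
        rw [← pow_add]
        congr 1
        omega
      rw [hFN, mul_pow, mul_pow]
      ring
    rw [h1]
    have h2 : (((N - 1).choose (N - k) : ℕ) : ℝ) * (L*t*F)^(N-k) * F^k
        ≤ (2:ℝ)^(N-1) * (1/4)^(N-k) * F^k := by
      gcongr <;> first
        | exact choose_le_two_pow' _ _
        | exact pow_le_pow_left₀ hLFn hLF _
        | positivity
    refine h2.trans (le_of_eq ?_)
    congr 1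
    have hz : (2:ℝ) ^ (2 * (k:ℤ) - (N:ℤ) - 1)
        = (2:ℝ) ^ (((N-1 : ℕ)):ℤ) * (2:ℝ) ^ ((-2:ℤ) * ((N-k : ℕ):ℤ)) := by
      rw [← zpow_add₀ (two_ne_zero)]
      congr 1
      push_cast [Nat.cast_sub hkN, Nat.cast_sub hk1]
      omega
    rw [hz, zpow_natCast, zpow_mul, zpow_natCast]
    norm_num
  calc X k t ≤ _ := hkey
    _ ≤ 2 ^ k * F0 ^ k + (2:ℝ) ^ (2 * (k:ℤ) - (N:ℤ) - 1) * F ^ k := add_le_add hsum htopb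
end

section
/- Let $T^* > 0$, $\tilde L, \tilde M \geq 0$ and suppose $(Y_k)_{k\geq 1}$ are nonnegative continuous functions on $[0,T^*]$ satisfying $Y_k(t) \leq k\tilde L\int_0^t Y_{k+1}(s)\,ds$ for all $k$, and $\sup_{t\leq T^*} Y_k(t) \leq \tilde M^k$ for all $k$. Then $Y_k(t) = 0$ for all $k \geq 1$ and all $t \in [0, T^*]$ with $2\tilde L\tilde M t < 1$. -/
open MeasureTheory intervalIntegral

lemma choose_le_two_pow'_s16 (m n : ℕ) : m.choose n ≤ 2 ^ m := by
  rcases le_or_gt n m with h | h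
  · calc m.choose n ≤ ∑ i ∈ Finset.range (m + 1), m.choose i :=
        Finset.single_le_sum (fun i _ => Nat.zero_le _)
          (Finset.mem_range.mpr (Nat.lt_succ_of_le h))
    _ = 2 ^ m := Nat.sum_range_choose m
  · simp [Nat.choose_eq_zero_of_lt h]

theorem hierarchy_uniqueness (T L M : ℝ) (hT : 0 < T) (hL : 0 ≤ L) (hM : 0 ≤ M)
    (Y : ℕ → ℝ → ℝ)
    (hcont : ∀ k, 1 ≤ k → ContinuousOn (Y k) (Set.Icc 0 T))
    (hnonneg : ∀ k, 1 ≤ k → ∀ t ∈ Set.Icc (0:ℝ) T, 0 ≤ Y k t)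
    (hrec : ∀ k, 1 ≤ k → ∀ t ∈ Set.Icc (0:ℝ) T,
      Y k t ≤ k * L * ∫ s in (0:ℝ)..t, Y (k + 1) s)
    (hbound : ∀ k, 1 ≤ k → ∀ t ∈ Set.Icc (0:ℝ) T, Y k t ≤ M ^ k) :
    ∀ k, 1 ≤ k → ∀ t ∈ Set.Icc (0:ℝ) T, 2 * L * M * t < 1 → Y k t = 0 := by
  -- Main iterated bound
  have main : ∀ n : ℕ, ∀ k, 1 ≤ k → ∀ t ∈ Set.Icc (0:ℝ) T,
      Y k t ≤ M ^ k * (M * L) ^ n * ((k + n - 1).choose n : ℝ) * t ^ n := by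
    intro n
    induction n with
    | zero =>
      intro k hk t ht
      simpa using hbound k hk t ht
    | succ n ih =>
      intro k hk t ht
      obtain ⟨ht0, htT⟩ := ht
      have hk1 : 1 ≤ k + 1 := by omega
      have hIcc : Set.Icc (0:ℝ) t ⊆ Set.Icc 0 T := Set.Icc_subset_Icc le_rfl htT
      have hint1 : IntervalIntegrable (Y (k + 1)) volume 0 t := by
        apply ContinuousOn.intervalIntegrable
        rw [Set.uIcc_of_le ht0]
        exact (hcont (k + 1) hk1).mono hIcc
      have hint2 : IntervalIntegrable
          (fun s => M ^ (k + 1) * (M * L) ^ n * (((k + 1) + n - 1).choose n : ℝ) * s ^ n)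
          volume 0 t := by
        apply Continuous.intervalIntegrable
        continuity
      have hle : ∫ s in (0:ℝ)..t, Y (k + 1) s ≤
          ∫ s in (0:ℝ)..t, M ^ (k + 1) * (M * L) ^ n * (((k + 1) + n - 1).choose n : ℝ) * s ^ n := by
        apply intervalIntegral.integral_mono_on ht0 hint1 hint2
        intro s hs
        exact ih (k + 1) hk1 s (hIcc hs)
      have heval : ∫ s in (0:ℝ)..t,
          M ^ (k + 1) * (M * L) ^ n * (((k + 1) + n - 1).choose n : ℝ) * s ^ n
          = M ^ (k + 1) * (M * L) ^ n * (((k + 1) + n - 1).choose n : ℝ) * (t ^ (n + 1) / (n + 1)) := by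
        rw [intervalIntegral.integral_const_mul, integral_pow]
        ring
      have hklL : (0:ℝ) ≤ (k : ℝ) * L := by positivity
      have h1 : Y k t ≤ k * L *
          (M ^ (k + 1) * (M * L) ^ n * (((k + 1) + n - 1).choose n : ℝ) * (t ^ (n + 1) / (n + 1))) := by
        calc Y k t ≤ k * L * ∫ s in (0:ℝ)..t, Y (k + 1) s := hrec k hk t ⟨ht0, htT⟩
        _ ≤ _ := by rw [← heval]; exact mul_le_mul_of_nonneg_left hle hklL
      have hidx1 : (k + 1) + n - 1 = k + n := by omega
      have hidx2 : k + (n + 1) - 1 = k + n := by omega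
      rw [hidx1] at h1
      rw [hidx2]
      refine h1.trans (le_of_eq ?_)
      have key : ((k + n).choose (n + 1) : ℝ) * (n + 1) = ((k + n).choose n : ℝ) * k := by
        have := Nat.choose_succ_right_eq (k + n) n
        have h2 : k + n - n = k := by omega
        rw [h2] at this
        exact_mod_cast this
      have hn1 : ((n : ℝ) + 1) ≠ 0 := by positivity
      have hC' : ((k + n).choose (n + 1) : ℝ) = ((k + n).choose n : ℝ) * k / (n + 1) := by
        rw [eq_div_iff hn1]; exact key
      rw [hC']
      field_simp
      ring
  -- Conclude
  intro k hk t ht hsmall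
  obtain ⟨ht0, htT⟩ := ht
  have hbd : ∀ n : ℕ, Y k t ≤ M ^ k * 2 ^ (k - 1) * (2 * L * M * t) ^ n := by
    intro n
    have h1 := main n k hk t ⟨ht0, htT⟩
    have h2 : ((k + n - 1).choose n : ℝ) ≤ 2 ^ (k + n - 1) := by
      exact_mod_cast choose_le_two_pow'_s16 (k + n - 1) n
    have h3 : (2:ℝ) ^ (k + n - 1) = 2 ^ (k - 1) * 2 ^ n := by
      rw [← pow_add]; congr 1; omega
    calc Y k t ≤ M ^ k * (M * L) ^ n * ((k + n - 1).choose n : ℝ) * t ^ n := h1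
      _ ≤ M ^ k * (M * L) ^ n * (2 ^ (k - 1) * 2 ^ n) * t ^ n := by
          rw [← h3]
          apply mul_le_mul_of_nonneg_right _ (by positivity)
          exact mul_le_mul_of_nonneg_left h2 (by positivity)
      _ = M ^ k * 2 ^ (k - 1) * (2 * L * M * t) ^ n := by
          rw [mul_pow, mul_pow, mul_pow, mul_pow]; ring
  have hlim : Filter.Tendsto (fun n : ℕ => M ^ k * 2 ^ (k - 1) * (2 * L * M * t) ^ n)
      Filter.atTop (nhds 0) := by
    have h0 : |2 * L * M * t| < 1 := by
      rw [abs_of_nonneg (by positivity)]; exact hsmall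
    have := tendsto_pow_atTop_nhds_zero_of_abs_lt_one h0
    simpa using this.const_mul (M ^ k * 2 ^ (k - 1))
  have hle0 : Y k t ≤ 0 := ge_of_tendsto hlim (Filter.Eventually.of_forall hbd)
  exact le_antisymm hle0 (hnonneg k hk t ⟨ht0, htT⟩)
end
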